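/- Let a, M, H, r, ϑ ∈ ℝ with ρ² ≠ 0 and Θ ≠ 0. The determinant of the Kerr–Vaidya–de Sitter metric matrix, i.e. of the symmetric 4×4 real matrix with nonzero entries g₀₀ = −(Δ_Λ − Θ·a²·sin²ϑ)/(ρ²·Z²), g₀₁ = g₁₀ = 1/Z, g₀₃ = g₃₀ = −(a·sin²ϑ/(ρ²·Z²))·(Γ·Θ − Δ_Λ), g₁₃ = g₃₁ = −a·sin²ϑ/Z, g₂₂ = ρ²/Θ, g₃₃ = (sin²ϑ/(ρ²·Z²))·(Γ²·Θ − Δ_Λ·a²·sin²ϑ), equals −ρ⁴·sin²ϑ/Z⁴. In particular √(−det g) = ρ²·sinϑ/Z² for ϑ ∈ (0,π). -/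

import Mathlib

noncomputable section
open Real

lemma det_pattern (A B C D E F : ℝ) :
    (!![A, B, 0, C; B, 0, 0, D; 0, 0, E, 0; C, D, 0, F] : Matrix (Fin 4) (Fin 4) ℝ).det
      = E * (2 * B * C * D - A * D ^ 2 - F * B ^ 2) := by
  simp [Matrix.det_succ_row_zero, Fin.sum_univ_succ, Fin.succAbove, show (Fin.castSucc 2 : Fin 4) = 2 from rfl]
  ring

def kerrVaidyaDeSitterMatrix (a M H r θ : ℝ) : Matrix (Fin 4) (Fin 4) ℝ :=
  let ρ2 : ℝ := r ^ 2 + a ^ 2 * Real.cos θ ^ 2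
  let Γ : ℝ := r ^ 2 + a ^ 2
  let Δ : ℝ := r ^ 2 - 2 * M * r + a ^ 2
  let ΔΛ : ℝ := Δ - Γ * r ^ 2 * H ^ 2
  let Θ : ℝ := 1 + H ^ 2 * a ^ 2 * Real.cos θ ^ 2
  let Z : ℝ := 1 + H ^ 2 * a ^ 2
  !![-((ΔΛ - Θ * a ^ 2 * Real.sin θ ^ 2) / (ρ2 * Z ^ 2)), 1 / Z, 0,
       -(a * Real.sin θ ^ 2 / (ρ2 * Z ^ 2) * (Γ * Θ - ΔΛ));
     1 / Z, 0, 0, -(a * Real.sin θ ^ 2 / Z);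
     0, 0, ρ2 / Θ, 0;
     -(a * Real.sin θ ^ 2 / (ρ2 * Z ^ 2) * (Γ * Θ - ΔΛ)), -(a * Real.sin θ ^ 2 / Z), 0,
       Real.sin θ ^ 2 / (ρ2 * Z ^ 2) * (Γ ^ 2 * Θ - ΔΛ * a ^ 2 * Real.sin θ ^ 2)]

/-- The determinant of the Kerr–Vaidya–de Sitter metric matrix equals `−ρ⁴·sin²ϑ/Z⁴`
whenever `ρ² ≠ 0` and `Θ ≠ 0`; in particular `√(−det g) = ρ²·sinϑ/Z²` for `ϑ ∈ (0,π)`. -/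
theorem kerrVaidyaDeSitter_det (a M H r θ : ℝ)
    (hρ : r ^ 2 + a ^ 2 * Real.cos θ ^ 2 ≠ 0)
    (hΘ : 1 + H ^ 2 * a ^ 2 * Real.cos θ ^ 2 ≠ 0) :
    (kerrVaidyaDeSitterMatrix a M H r θ).det
        = -((r ^ 2 + a ^ 2 * Real.cos θ ^ 2) ^ 2 * Real.sin θ ^ 2
            / (1 + H ^ 2 * a ^ 2) ^ 4) ∧
      (θ ∈ Set.Ioo 0 π →
        Real.sqrt (-(kerrVaidyaDeSitterMatrix a M H r θ).det)
          = (r ^ 2 + a ^ 2 * Real.cos θ ^ 2) * Real.sin θ / (1 + H ^ 2 * a ^ 2) ^ 2) := by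
  have hZ : (1 + H ^ 2 * a ^ 2) ≠ 0 := by positivity
  have hdet : (kerrVaidyaDeSitterMatrix a M H r θ).det
      = -((r ^ 2 + a ^ 2 * Real.cos θ ^ 2) ^ 2 * Real.sin θ ^ 2
          / (1 + H ^ 2 * a ^ 2) ^ 4) := by
    rw [kerrVaidyaDeSitterMatrix, det_pattern]
    have hc : Real.sin θ ^ 2 = 1 - Real.cos θ ^ 2 := Real.sin_sq θ
    rw [hc]
    field_simp
    ring
  refine ⟨hdet, fun hθ => ?_⟩
  rw [hdet, neg_neg]
  have hs : 0 ≤ Real.sin θ := Real.sin_nonneg_of_nonneg_of_le_pi hθ.1.le hθ.2.le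
  have hρ2 : 0 ≤ r ^ 2 + a ^ 2 * Real.cos θ ^ 2 := by positivity
  rw [show (r ^ 2 + a ^ 2 * Real.cos θ ^ 2) ^ 2 * Real.sin θ ^ 2 / (1 + H ^ 2 * a ^ 2) ^ 4
      = ((r ^ 2 + a ^ 2 * Real.cos θ ^ 2) * Real.sin θ / (1 + H ^ 2 * a ^ 2) ^ 2) ^ 2 by
        field_simp]
  exact Real.sqrt_sq (by positivity)
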